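/- The subspace ⟨e2⟩ is the unique one-dimensional (two-sided) ideal of A5. -/
import Mathlib


set_option linter.unreachableTactic false
set_option linter.unnecessarySeqFocus false
set_option linter.unusedTactic false

noncomputable section

/-- The underlying space of our 3-dimensional algebras. -/
abbrev V3 : Type := Fin 3 → ℂ
/-- Multiplication of `A5` (and of `S2`): unit `e1`, with `e2 * e3 = e2`,
`e3 * e2 = -e2`, `e3 * e3 = e1` and `e2 * e2 = 0`. -/
def A5mul : V3 →ₗ[ℂ] V3 →ₗ[ℂ] V3 :=
  LinearMap.mk₂ ℂ
    (fun x y => ![x 0 * y 0 + x 2 * y 2,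
                  x 0 * y 1 + x 1 * y 0 + x 1 * y 2 - x 2 * y 1,
                  x 0 * y 2 + x 2 * y 0])
    (fun x x' y => by funext k; fin_cases k <;> simp <;> ring)
    (fun a x y => by funext k; fin_cases k <;> simp <;> ring)
    (fun x y y' => by funext k; fin_cases k <;> simp <;> ring)
    (fun a x y => by funext k; fin_cases k <;> simp <;> ring)
/-- The basis vector `e1` (the unit). -/
def e1 : V3 := ![1, 0, 0]
/-- The basis vector `e2`. -/
def e2 : V3 := ![0, 1, 0]
/-- The basis vector `e3`. -/
def e3 : V3 := ![0, 0, 1]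

lemma e2_ne_zero : e2 ≠ 0 := by
  intro h
  have := congrFun h 1
  simp [e2] at this

/-- **Theorem.** `⟨e2⟩` is the unique one-dimensional two-sided ideal of `A5`. -/
theorem one_dim_ideals_of_A5 (W : Submodule ℂ V3) :
    ((∀ x ∈ W, ∀ y : V3, A5mul x y ∈ W ∧ A5mul y x ∈ W) ∧ Module.finrank ℂ W = 1) ↔
      W = Submodule.span ℂ {e2} := by
  constructor
  · rintro ⟨hI, hr⟩
    obtain ⟨v, hv, hspan⟩ := finrank_eq_one_iff'.mp hr
    set u : V3 := (v : V3) with hu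
    have hune : u ≠ 0 := fun h => hv (Subtype.ext h)
    -- e2 * u ∈ W and u * e2 ∈ W
    obtain ⟨h1, h2⟩ := hI u v.2 e2
    obtain ⟨a, ha⟩ := hspan ⟨A5mul e2 u, h2⟩
    obtain ⟨b, hb⟩ := hspan ⟨A5mul u e2, h1⟩
    have ha' : a • u = A5mul e2 u := congrArg Subtype.val ha
    have hb' : b • u = A5mul u e2 := congrArg Subtype.val hb
    have ha0 : a * u 0 = 0 := by
      have := congrFun ha' 0; simpa [A5mul, e2] using this
    have ha1 : a * u 1 = u 0 + u 2 := by
      have := congrFun ha' 1; simpa [A5mul, e2] using this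
    have ha2 : a * u 2 = 0 := by
      have := congrFun ha' 2; simpa [A5mul, e2] using this
    have hb0 : b * u 0 = 0 := by
      have := congrFun hb' 0; simpa [A5mul, e2] using this
    have hb1 : b * u 1 = u 0 - u 2 := by
      have := congrFun hb' 1; simpa [A5mul, e2] using this
    have hb2 : b * u 2 = 0 := by
      have := congrFun hb' 2; simpa [A5mul, e2] using this
    have h0 : u 0 = 0 := by
      rcases mul_eq_zero.mp ha0 with h | h
      · rcases mul_eq_zero.mp hb0 with h' | h'
        · subst h h'; simp at ha1 hb1; linear_combination (-ha1 - hb1) / 2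
        · exact h'
      · exact h
    have h2' : u 2 = 0 := by
      rcases mul_eq_zero.mp ha2 with h | h
      · subst h; simp [h0] at ha1; linear_combination -ha1
      · exact h
    have h1' : u 1 ≠ 0 := by
      intro h
      apply hune
      funext k; fin_cases k <;> simp [h0, h, h2']
    have hue2 : u = u 1 • e2 := by
      funext k; fin_cases k <;> simp [e2, h0, h2']
    have he2W : e2 ∈ W := by
      have he2eq : e2 = (u 1)⁻¹ • u := by
        funext k; fin_cases k <;> simp [e2, h0, h2'] <;> field_simp
      rw [he2eq]; exact W.smul_mem _ v.2
    apply le_antisymm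
    · intro x hx
      obtain ⟨c, hc⟩ := hspan ⟨x, hx⟩
      have hc' : c • u = x := congrArg Subtype.val hc
      rw [Submodule.mem_span_singleton]
      exact ⟨c * u 1, by rw [mul_smul, ← hue2, hc']⟩
    · rw [Submodule.span_singleton_le_iff_mem]
      exact he2W
  · rintro rfl
    refine ⟨?_, ?_⟩
    · intro x hx y
      rw [Submodule.mem_span_singleton] at hx
      obtain ⟨c, rfl⟩ := hx
      constructor <;> rw [Submodule.mem_span_singleton]
      · exact ⟨c * (y 0 + y 2), by
          funext k; fin_cases k <;> simp [A5mul, e2] <;> ring⟩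
      · exact ⟨c * (y 0 - y 2), by
          funext k; fin_cases k <;> simp [A5mul, e2] <;> ring⟩
    · exact finrank_span_singleton e2_ne_zero
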